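/- arXiv:2601.02803 — 8 statements merged into one kernel-verified Lean document; each statement's English description precedes it below -/
import Mathlib

section
/- The multiset extension of an ordering pair is itself an ordering pair: if (≻, ⪰) is an ordering pair on a set A (≻ well-founded, transitive, irreflexive; ⪰ reflexive, transitive; ≻ ⊆ ⪰; ≻·⪰ ⊆ ≻ and ⪰·≻ ⊆ ≻), then the relations (≻_mul, ⪰_mul) on size-2 multisets over A defined by: {a₁,a₂} ⪰_mul {b₁,b₂} iff either some aᵢ satisfies aᵢ ≻ b₁ and aᵢ ≻ b₂, or there is a pairing with a ⪰ b componentwise; and {a₁,a₂} ≻_mul {b₁,b₂} iff either some aᵢ satisfies aᵢ ≻ b₁ and aᵢ ≻ b₂, or there exist i,j with aᵢ ≻ b_j and a_{3-i} ⪰ b_{3-j}; form an ordering pair on size-2 multisets. -/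
variable {A : Type*}

/-- Strict part of the size-2 multiset extension of an ordering pair.
Ordered pairs represent unordered size-2 multisets; the definition is
invariant under swapping the components of either side. -/
def succMul (succ succeq : A → A → Prop) (p q : A × A) : Prop :=
  (succ p.1 q.1 ∧ succ p.1 q.2) ∨ (succ p.2 q.1 ∧ succ p.2 q.2) ∨
  (succ p.1 q.1 ∧ succeq p.2 q.2) ∨ (succ p.1 q.2 ∧ succeq p.2 q.1) ∨
  (succ p.2 q.1 ∧ succeq p.1 q.2) ∨ (succ p.2 q.2 ∧ succeq p.1 q.1)

/-- Weak part of the size-2 multiset extension of an ordering pair. -/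
def succeqMul (succ succeq : A → A → Prop) (p q : A × A) : Prop :=
  (succ p.1 q.1 ∧ succ p.1 q.2) ∨ (succ p.2 q.1 ∧ succ p.2 q.2) ∨
  (succeq p.1 q.1 ∧ succeq p.2 q.2) ∨ (succeq p.1 q.2 ∧ succeq p.2 q.1)

/-!
A strict decrease in the multiset extension lowers the pair (larger rank, smaller rank) of the
ranks of `succ` lexicographically, because `succeq` cannot raise a rank; this gives
well-foundedness. The compositions reduce to two observations: an element strictly above both
members of a multiset stays so after a weak step down, and a componentwise `succeq` step on either
side preserves the extensions.
-/

theorem IsWellFounded.rank_le_rank_of_forall_rel {α : Type*} {r : α → α → Prop}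
    [IsWellFounded α r] {a b : α} (h : ∀ c, r c a → r c b) :
    IsWellFounded.rank r a ≤ IsWellFounded.rank r b := by
  rw [IsWellFounded.rank_eq r a]
  exact Ordinal.iSup_le fun ⟨c, hc⟩ => Order.succ_le_of_lt (rank_lt_of_rel (h c hc))

section MaxMin

variable {β : Type*} [LinearOrder β]

-- The lexicographic order on `maxMin` is the multiset order on two-element multisets.
def maxMin (x y : β) : β ×ₗ β := toLex (max x y, min x y)

theorem maxMin_comm (x y : β) : maxMin x y = maxMin y x := by
  simp only [maxMin, max_comm, min_comm]

theorem maxMin_lt_maxMin_of_max_lt {x y u v : β} (h : max x y < max u v) :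
    maxMin x y < maxMin u v :=
  Prod.Lex.toLex_lt_toLex.2 (Or.inl h)

theorem maxMin_lt_maxMin_of_lt_of_le {x y u v : β} (hx : x < u) (hy : y ≤ v) :
    maxMin x y < maxMin u v := by
  rw [maxMin, maxMin, Prod.Lex.toLex_lt_toLex]
  grind

end MaxMin

section MultisetExtension

variable {succ succeq : A → A → Prop} {a b : A} {p q r : A × A}

theorem succMul_swap_left : succMul succ succeq p.swap q ↔ succMul succ succeq p q := by
  simp only [succMul, Prod.fst_swap, Prod.snd_swap]
  tauto

theorem succMul_swap_right : succMul succ succeq p q.swap ↔ succMul succ succeq p q := by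
  simp only [succMul, Prod.fst_swap, Prod.snd_swap]
  tauto

theorem succeqMul_swap_right : succeqMul succ succeq p q.swap ↔ succeqMul succ succeq p q := by
  simp only [succeqMul, Prod.fst_swap, Prod.snd_swap]
  tauto

theorem succeqMul_refl (hrefl : ∀ a, succeq a a) (p : A × A) : succeqMul succ succeq p p :=
  Or.inr (Or.inr (Or.inl ⟨hrefl _, hrefl _⟩))

theorem succeqMul_of_succMul (hsub : ∀ a b, succ a b → succeq a b)
    (h : succMul succ succeq p q) : succeqMul succ succeq p q := by
  rcases h with h | h | ⟨h₁, h₂⟩ | ⟨h₁, h₂⟩ | ⟨h₁, h₂⟩ | ⟨h₁, h₂⟩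
  · exact Or.inl h
  · exact Or.inr (Or.inl h)
  · exact Or.inr (Or.inr (Or.inl ⟨hsub _ _ h₁, h₂⟩))
  · exact Or.inr (Or.inr (Or.inr ⟨hsub _ _ h₁, h₂⟩))
  · exact Or.inr (Or.inr (Or.inr ⟨h₂, hsub _ _ h₁⟩))
  · exact Or.inr (Or.inr (Or.inl ⟨h₂, hsub _ _ h₁⟩))

def Dominates (succ : A → A → Prop) (a : A) (q : A × A) : Prop :=
  succ a q.1 ∧ succ a q.2

theorem Dominates.of_succ (htrans : ∀ a b c, succ a b → succ b c → succ a c)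
    (hab : succ a b) (hb : Dominates succ b r) : Dominates succ a r :=
  ⟨htrans _ _ _ hab hb.1, htrans _ _ _ hab hb.2⟩

theorem Dominates.of_succeq (hcompat₂ : ∀ a b c, succeq a b → succ b c → succ a c)
    (hab : succeq a b) (hb : Dominates succ b r) : Dominates succ a r :=
  ⟨hcompat₂ _ _ _ hab hb.1, hcompat₂ _ _ _ hab hb.2⟩

theorem Dominates.of_succeqMul (htrans : ∀ a b c, succ a b → succ b c → succ a c)
    (hcompat₁ : ∀ a b c, succ a b → succeq b c → succ a c)
    (ha : Dominates succ a q) (hqr : succeqMul succ succeq q r) : Dominates succ a r := by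
  rcases hqr with hq | hq | ⟨h₁, h₂⟩ | ⟨h₁, h₂⟩
  · exact Dominates.of_succ htrans ha.1 hq
  · exact Dominates.of_succ htrans ha.2 hq
  · exact ⟨hcompat₁ _ _ _ ha.1 h₁, hcompat₁ _ _ _ ha.2 h₂⟩
  · exact ⟨hcompat₁ _ _ _ ha.2 h₂, hcompat₁ _ _ _ ha.1 h₁⟩

theorem dominates_of_succeqMul_of_dominates_fst
    (htrans : ∀ a b c, succ a b → succ b c → succ a c)
    (hcompat₂ : ∀ a b c, succeq a b → succ b c → succ a c)
    (hpq : succeqMul succ succeq p q) (hq : Dominates succ q.1 r) :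
    Dominates succ p.1 r ∨ Dominates succ p.2 r := by
  rcases hpq with ⟨h, -⟩ | ⟨h, -⟩ | ⟨h, -⟩ | ⟨-, h⟩
  · exact Or.inl (hq.of_succ htrans h)
  · exact Or.inr (hq.of_succ htrans h)
  · exact Or.inl (hq.of_succeq hcompat₂ h)
  · exact Or.inr (hq.of_succeq hcompat₂ h)

theorem dominates_of_succeqMul_of_dominates
    (htrans : ∀ a b c, succ a b → succ b c → succ a c)
    (hcompat₂ : ∀ a b c, succeq a b → succ b c → succ a c)
    (hpq : succeqMul succ succeq p q) (hq : Dominates succ q.1 r ∨ Dominates succ q.2 r) :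
    Dominates succ p.1 r ∨ Dominates succ p.2 r := by
  rcases hq with hq | hq
  · exact dominates_of_succeqMul_of_dominates_fst htrans hcompat₂ hpq hq
  · exact dominates_of_succeqMul_of_dominates_fst htrans hcompat₂ (succeqMul_swap_right.2 hpq) hq

theorem succMul_of_succeq_of_succeq_of_succMul
    (heqtrans : ∀ a b c, succeq a b → succeq b c → succeq a c)
    (hcompat₂ : ∀ a b c, succeq a b → succ b c → succ a c)
    (h₁ : succeq p.1 q.1) (h₂ : succeq p.2 q.2) (hqr : succMul succ succeq q r) :
    succMul succ succeq p r := by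
  rcases hqr with hq | hq | ⟨k₁, k₂⟩ | ⟨k₁, k₂⟩ | ⟨k₁, k₂⟩ | ⟨k₁, k₂⟩
  · exact Or.inl (Dominates.of_succeq hcompat₂ h₁ hq)
  · exact Or.inr (Or.inl (Dominates.of_succeq hcompat₂ h₂ hq))
  · exact Or.inr (Or.inr (Or.inl ⟨hcompat₂ _ _ _ h₁ k₁, heqtrans _ _ _ h₂ k₂⟩))
  · exact Or.inr (Or.inr (Or.inr (Or.inl ⟨hcompat₂ _ _ _ h₁ k₁, heqtrans _ _ _ h₂ k₂⟩)))
  · exact Or.inr (Or.inr (Or.inr (Or.inr (Or.inl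
      ⟨hcompat₂ _ _ _ h₂ k₁, heqtrans _ _ _ h₁ k₂⟩))))
  · exact Or.inr (Or.inr (Or.inr (Or.inr (Or.inr
      ⟨hcompat₂ _ _ _ h₂ k₁, heqtrans _ _ _ h₁ k₂⟩))))

theorem succMul_of_succMul_of_succeq_of_succeq
    (heqtrans : ∀ a b c, succeq a b → succeq b c → succeq a c)
    (hcompat₁ : ∀ a b c, succ a b → succeq b c → succ a c)
    (hpq : succMul succ succeq p q) (h₁ : succeq q.1 r.1) (h₂ : succeq q.2 r.2) :
    succMul succ succeq p r := by
  rcases hpq with ⟨k₁, k₂⟩ | ⟨k₁, k₂⟩ | ⟨k₁, k₂⟩ | ⟨k₁, k₂⟩ | ⟨k₁, k₂⟩ | ⟨k₁, k₂⟩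
  · exact Or.inl ⟨hcompat₁ _ _ _ k₁ h₁, hcompat₁ _ _ _ k₂ h₂⟩
  · exact Or.inr (Or.inl ⟨hcompat₁ _ _ _ k₁ h₁, hcompat₁ _ _ _ k₂ h₂⟩)
  · exact Or.inr (Or.inr (Or.inl ⟨hcompat₁ _ _ _ k₁ h₁, heqtrans _ _ _ k₂ h₂⟩))
  · exact Or.inr (Or.inr (Or.inr (Or.inl ⟨hcompat₁ _ _ _ k₁ h₂, heqtrans _ _ _ k₂ h₁⟩)))
  · exact Or.inr (Or.inr (Or.inr (Or.inr (Or.inl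
      ⟨hcompat₁ _ _ _ k₁ h₁, heqtrans _ _ _ k₂ h₂⟩))))
  · exact Or.inr (Or.inr (Or.inr (Or.inr (Or.inr
      ⟨hcompat₁ _ _ _ k₁ h₂, heqtrans _ _ _ k₂ h₁⟩))))

theorem succeqMul_of_succeqMul_of_succeq_of_succeq
    (heqtrans : ∀ a b c, succeq a b → succeq b c → succeq a c)
    (hcompat₁ : ∀ a b c, succ a b → succeq b c → succ a c)
    (hpq : succeqMul succ succeq p q) (h₁ : succeq q.1 r.1) (h₂ : succeq q.2 r.2) :
    succeqMul succ succeq p r := by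
  rcases hpq with ⟨k₁, k₂⟩ | ⟨k₁, k₂⟩ | ⟨k₁, k₂⟩ | ⟨k₁, k₂⟩
  · exact Or.inl ⟨hcompat₁ _ _ _ k₁ h₁, hcompat₁ _ _ _ k₂ h₂⟩
  · exact Or.inr (Or.inl ⟨hcompat₁ _ _ _ k₁ h₁, hcompat₁ _ _ _ k₂ h₂⟩)
  · exact Or.inr (Or.inr (Or.inl ⟨heqtrans _ _ _ k₁ h₁, heqtrans _ _ _ k₂ h₂⟩))
  · exact Or.inr (Or.inr (Or.inr ⟨heqtrans _ _ _ k₁ h₂, heqtrans _ _ _ k₂ h₁⟩))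

theorem succMul_of_succMul_of_succeqMul
    (htrans : ∀ a b c, succ a b → succ b c → succ a c)
    (heqtrans : ∀ a b c, succeq a b → succeq b c → succeq a c)
    (hsub : ∀ a b, succ a b → succeq a b)
    (hcompat₁ : ∀ a b c, succ a b → succeq b c → succ a c)
    (hcompat₂ : ∀ a b c, succeq a b → succ b c → succ a c)
    (hpq : succMul succ succeq p q) (hqr : succeqMul succ succeq q r) :
    succMul succ succeq p r := by
  have hpq' := succeqMul_of_succMul hsub hpq
  rcases hqr with hq | hq | ⟨h₁, h₂⟩ | ⟨h₁, h₂⟩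
  · exact (dominates_of_succeqMul_of_dominates htrans hcompat₂ hpq' (Or.inl hq)).imp_right Or.inl
  · exact (dominates_of_succeqMul_of_dominates htrans hcompat₂ hpq' (Or.inr hq)).imp_right Or.inl
  · exact succMul_of_succMul_of_succeq_of_succeq heqtrans hcompat₁ hpq h₁ h₂
  · exact succMul_swap_right.1 (succMul_of_succMul_of_succeq_of_succeq heqtrans hcompat₁ hpq h₁ h₂)

theorem succMul_of_succeqMul_of_succMul
    (htrans : ∀ a b c, succ a b → succ b c → succ a c)
    (heqtrans : ∀ a b c, succeq a b → succeq b c → succeq a c)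
    (hsub : ∀ a b, succ a b → succeq a b)
    (hcompat₁ : ∀ a b c, succ a b → succeq b c → succ a c)
    (hcompat₂ : ∀ a b c, succeq a b → succ b c → succ a c)
    (hpq : succeqMul succ succeq p q) (hqr : succMul succ succeq q r) :
    succMul succ succeq p r := by
  have hqr' := succeqMul_of_succMul hsub hqr
  rcases hpq with hp | hp | ⟨h₁, h₂⟩ | ⟨h₁, h₂⟩
  · exact Or.inl (Dominates.of_succeqMul htrans hcompat₁ hp hqr')
  · exact Or.inr (Or.inl (Dominates.of_succeqMul htrans hcompat₁ hp hqr'))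
  · exact succMul_of_succeq_of_succeq_of_succMul heqtrans hcompat₂ h₁ h₂ hqr
  · exact succMul_of_succeq_of_succeq_of_succMul heqtrans hcompat₂ h₁ h₂ (succMul_swap_left.2 hqr)

theorem succeqMul_trans
    (htrans : ∀ a b c, succ a b → succ b c → succ a c)
    (heqtrans : ∀ a b c, succeq a b → succeq b c → succeq a c)
    (hcompat₁ : ∀ a b c, succ a b → succeq b c → succ a c)
    (hcompat₂ : ∀ a b c, succeq a b → succ b c → succ a c)
    (hpq : succeqMul succ succeq p q) (hqr : succeqMul succ succeq q r) :
    succeqMul succ succeq p r := by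
  rcases hqr with hq | hq | ⟨h₁, h₂⟩ | ⟨h₁, h₂⟩
  · exact (dominates_of_succeqMul_of_dominates htrans hcompat₂ hpq (Or.inl hq)).imp_right Or.inl
  · exact (dominates_of_succeqMul_of_dominates htrans hcompat₂ hpq (Or.inr hq)).imp_right Or.inl
  · exact succeqMul_of_succeqMul_of_succeq_of_succeq heqtrans hcompat₁ hpq h₁ h₂
  · exact succeqMul_swap_right.1
      (succeqMul_of_succeqMul_of_succeq_of_succeq heqtrans hcompat₁ hpq h₁ h₂)

theorem maxMin_lt_maxMin_of_succMul {β : Type*} [LinearOrder β] {f : A → β}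
    (hlt : ∀ a b, succ a b → f b < f a) (hle : ∀ a b, succeq a b → f b ≤ f a)
    (h : succMul succ succeq q p) : maxMin (f p.1) (f p.2) < maxMin (f q.1) (f q.2) := by
  rcases h with ⟨k₁, k₂⟩ | ⟨k₁, k₂⟩ | ⟨k₁, k₂⟩ | ⟨k₁, k₂⟩ | ⟨k₁, k₂⟩ | ⟨k₁, k₂⟩
  · exact maxMin_lt_maxMin_of_max_lt ((max_lt (hlt _ _ k₁) (hlt _ _ k₂)).trans_le (le_max_left _ _))
  · exact maxMin_lt_maxMin_of_max_lt ((max_lt (hlt _ _ k₁) (hlt _ _ k₂)).trans_le (le_max_right _ _))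
  · exact maxMin_lt_maxMin_of_lt_of_le (hlt _ _ k₁) (hle _ _ k₂)
  · rw [maxMin_comm (f p.1)]
    exact maxMin_lt_maxMin_of_lt_of_le (hlt _ _ k₁) (hle _ _ k₂)
  · rw [maxMin_comm (f q.1)]
    exact maxMin_lt_maxMin_of_lt_of_le (hlt _ _ k₁) (hle _ _ k₂)
  · rw [maxMin_comm (f p.1), maxMin_comm (f q.1)]
    exact maxMin_lt_maxMin_of_lt_of_le (hlt _ _ k₁) (hle _ _ k₂)

theorem wellFounded_succMul (hwf : WellFounded (fun a b => succ b a))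
    (hcompat₂ : ∀ a b c, succeq a b → succ b c → succ a c) :
    WellFounded (fun p q => succMul succ succeq q p) := by
  have : IsWellFounded A (fun a b => succ b a) := ⟨hwf⟩
  let ρ := IsWellFounded.rank (fun a b => succ b a)
  have hlt : ∀ a b, succ a b → ρ b < ρ a := fun _ _ hab =>
    IsWellFounded.rank_lt_of_rel (r := fun a b => succ b a) hab
  have hle : ∀ a b, succeq a b → ρ b ≤ ρ a := fun _ _ hab =>
    IsWellFounded.rank_le_rank_of_forall_rel fun _ hc => hcompat₂ _ _ _ hab hc
  exact Subrelation.wf (maxMin_lt_maxMin_of_succMul hlt hle)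
    (InvImage.wf (fun p : A × A => maxMin (ρ p.1) (ρ p.2)) wellFounded_lt)

end MultisetExtension

theorem multiset_extension_is_ordering_pair_general
    (succ succeq : A → A → Prop)
    (hwf : WellFounded (fun a b => succ b a))
    (htrans : ∀ a b c, succ a b → succ b c → succ a c)
    (hrefl : ∀ a, succeq a a)
    (heqtrans : ∀ a b c, succeq a b → succeq b c → succeq a c)
    (hsub : ∀ a b, succ a b → succeq a b)
    (hcompat₁ : ∀ a b c, succ a b → succeq b c → succ a c)
    (hcompat₂ : ∀ a b c, succeq a b → succ b c → succ a c) :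
    WellFounded (fun p q => succMul succ succeq q p) ∧
    (∀ p q r, succMul succ succeq p q → succMul succ succeq q r → succMul succ succeq p r) ∧
    (∀ p, ¬ succMul succ succeq p p) ∧
    (∀ p, succeqMul succ succeq p p) ∧
    (∀ p q r, succeqMul succ succeq p q → succeqMul succ succeq q r →
        succeqMul succ succeq p r) ∧
    (∀ p q, succMul succ succeq p q → succeqMul succ succeq p q) ∧
    (∀ p q r, succMul succ succeq p q → succeqMul succ succeq q r → succMul succ succeq p r) ∧
    (∀ p q r, succeqMul succ succeq p q → succMul succ succeq q r → succMul succ succeq p r) := by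
  have hwfMul := wellFounded_succMul hwf hcompat₂
  have hcomp₁ : ∀ p q r, succMul succ succeq p q → succeqMul succ succeq q r →
      succMul succ succeq p r := fun _ _ _ =>
    succMul_of_succMul_of_succeqMul htrans heqtrans hsub hcompat₁ hcompat₂
  exact ⟨hwfMul,
    fun _ _ _ hpq hqr => hcomp₁ _ _ _ hpq (succeqMul_of_succMul hsub hqr),
    hwfMul.irrefl.irrefl,
    succeqMul_refl hrefl,
    fun _ _ _ => succeqMul_trans htrans heqtrans hcompat₁ hcompat₂,
    fun _ _ => succeqMul_of_succMul hsub,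
    hcomp₁,
    fun _ _ _ => succMul_of_succeqMul_of_succMul htrans heqtrans hsub hcompat₁ hcompat₂⟩

/-- The multiset extension of an ordering pair is itself an ordering pair
on size-2 multisets. -/
theorem multiset_extension_is_ordering_pair
    (succ succeq : A → A → Prop)
    (hwf : WellFounded (fun a b => succ b a))
    (htrans : ∀ a b c, succ a b → succ b c → succ a c)
    (hirr : ∀ a, ¬ succ a a)
    (hrefl : ∀ a, succeq a a)
    (heqtrans : ∀ a b c, succeq a b → succeq b c → succeq a c)
    (hsub : ∀ a b, succ a b → succeq a b)
    (hcompat₁ : ∀ a b c, succ a b → succeq b c → succ a c)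
    (hcompat₂ : ∀ a b c, succeq a b → succ b c → succ a c) :
    WellFounded (fun p q => succMul succ succeq q p) ∧
    (∀ p q r, succMul succ succeq p q → succMul succ succeq q r → succMul succ succeq p r) ∧
    (∀ p, ¬ succMul succ succeq p p) ∧
    (∀ p, succeqMul succ succeq p p) ∧
    (∀ p q r, succeqMul succ succeq p q → succeqMul succ succeq q r →
        succeqMul succ succeq p r) ∧
    (∀ p q, succMul succ succeq p q → succeqMul succ succeq p q) ∧
    (∀ p q r, succMul succ succeq p q → succeqMul succ succeq q r → succMul succ succeq p r) ∧
    (∀ p q r, succeqMul succ succeq p q → succMul succ succeq q r → succMul succ succeq p r) :=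
  multiset_extension_is_ordering_pair_general succ succeq hwf htrans hrefl heqtrans hsub hcompat₁
    hcompat₂
end

section
/- If ⊐ is a monotonic well-founded partial ordering on terms that contains the rewrite relation →_R, and ≻ is defined as the transitive closure of (⊐ ∪ ▷) where ▷ is the strict subterm relation, then ≻ is well-founded. -/
/-!
By monotonicity, a subterm step followed by a `⊐`-step, `a ▷ x ⊐ b`, can be traded for
`a ⊐ C[b] ▷ b`. Hence in an infinite `(⊐ ∪ ▷)`-chain the `⊐`-steps can always be moved forward;
since `▷` alone is well-founded there are infinitely many of them, contradicting
well-foundedness of `⊐`. Well-foundedness then passes to the transitive closure.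
-/

inductive Tm (Sig V : Type*) : Type _
  | sym : Sig → Tm Sig V
  | var : V → Tm Sig V
  | app : Tm Sig V → Tm Sig V → Tm Sig V

/-- `ImmSup s t` : `t` is an immediate subterm of `s` (so `s ▷₁ t`). -/
def ImmSup {Sig V : Type*} (s t : Tm Sig V) : Prop :=
  (∃ u, s = Tm.app t u) ∨ (∃ u, s = Tm.app u t)

section Commute

variable {α : Type*} {r s : α → α → Prop}

theorem Acc.or_of_commute (hs : WellFounded s)
    (hcomm : ∀ {a x b}, s x a → r b x → ∃ d, r d a ∧ s b d) {a : α}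
    (hr : ∀ b, r b a → Acc (fun x y => r x y ∨ s x y) b) :
    Acc (fun x y => r x y ∨ s x y) a := by
  induction hs.apply a with
  | intro a _ ih =>
    refine ⟨_, fun x hx => hx.elim (hr x) fun hxa => ih x hxa fun b hbx => ?_⟩
    obtain ⟨d, hda, hbd⟩ := hcomm hxa hbx
    exact (hr d hda).inv (Or.inr hbd)

theorem WellFounded.or_of_commute (hr : WellFounded r) (hs : WellFounded s)
    (hcomm : ∀ {a x b}, s x a → r b x → ∃ d, r d a ∧ s b d) :
    WellFounded (fun x y => r x y ∨ s x y) :=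
  ⟨fun a => hr.induction a fun _ ih => Acc.or_of_commute hs hcomm ih⟩

end Commute

namespace ImmSup

variable {Sig V : Type*}

theorem wellFounded_flip : WellFounded (flip (@ImmSup Sig V)) := by
  refine ⟨fun t => ?_⟩
  induction t with
  | sym f => exact ⟨_, by rintro a (⟨u, h⟩ | ⟨u, h⟩) <;> cases h⟩
  | var v => exact ⟨_, by rintro a (⟨u, h⟩ | ⟨u, h⟩) <;> cases h⟩
  | app x y ihx ihy =>
    refine ⟨_, ?_⟩
    rintro a (⟨u, h⟩ | ⟨u, h⟩) <;> cases h
    exacts [ihx, ihy]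

theorem exists_gt_immSup_of_monotone {gt : Tm Sig V → Tm Sig V → Prop}
    (hmonoL : ∀ s t u, gt s t → gt (Tm.app s u) (Tm.app t u))
    (hmonoR : ∀ s t u, gt s t → gt (Tm.app u s) (Tm.app u t)) {a x b : Tm Sig V}
    (hax : ImmSup a x) (hxb : gt x b) : ∃ d, gt a d ∧ ImmSup d b := by
  rcases hax with ⟨u, rfl⟩ | ⟨u, rfl⟩
  · exact ⟨Tm.app b u, hmonoL _ _ _ hxb, Or.inl ⟨u, rfl⟩⟩
  · exact ⟨Tm.app u b, hmonoR _ _ _ hxb, Or.inr ⟨u, rfl⟩⟩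

end ImmSup

theorem wellFounded_transGen_union_subterm_general {Sig V : Type*}
    (gt : Tm Sig V → Tm Sig V → Prop)
    (hwf : WellFounded (fun a b => gt b a))
    (hmonoL : ∀ s t u, gt s t → gt (Tm.app s u) (Tm.app t u))
    (hmonoR : ∀ s t u, gt s t → gt (Tm.app u s) (Tm.app u t)) :
    WellFounded (fun a b =>
      Relation.TransGen (fun x y => gt x y ∨ ImmSup x y) b a) := by
  have hunion : WellFounded (fun a b => gt b a ∨ ImmSup b a) :=
    hwf.or_of_commute ImmSup.wellFounded_flip
      (ImmSup.exists_gt_immSup_of_monotone hmonoL hmonoR)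
  exact Subrelation.wf Relation.transGen_swap.mpr hunion.transGen

/-- If `⊐` is a monotonic well-founded partial ordering on terms containing the
rewrite relation `→_R`, then the transitive closure of `⊐ ∪ ▷` is well-founded,
where `▷` is the (immediate) subterm relation. -/
theorem wellFounded_transGen_union_subterm {Sig V : Type*}
    (gt Rw : Tm Sig V → Tm Sig V → Prop)
    (hwf : WellFounded (fun a b => gt b a))
    (htrans : ∀ a b c, gt a b → gt b c → gt a c)
    (hirr : ∀ a, ¬ gt a a)
    (hmonoL : ∀ s t u, gt s t → gt (Tm.app s u) (Tm.app t u))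
    (hmonoR : ∀ s t u, gt s t → gt (Tm.app u s) (Tm.app u t))
    (hRw : ∀ a b, Rw a b → gt a b) :
    WellFounded (fun a b =>
      Relation.TransGen (fun x y => gt x y ∨ ImmSup x y) b a) :=
  wellFounded_transGen_union_subterm_general gt hwf hmonoL hmonoR
end

section
/- Each derivation of bounded rewriting induction that preserves bounds maintains the invariant that all equation contexts are bounded; in particular, the abstract 'peak commutation' lemma holds: let ≻ be a well-founded relation on ground terms, s a fixed term, and define u →_s v if u = C[a], v = C[b] with s ≻ a, s ≻ b, and a →_R* b. Suppose →_R is terminating, s is a minimal counterexample to local ground confluence (so all terms strictly below s w.r.t. ≻ or reachable via →_R⁺ are confluent in the sense of part (ii) of the minimality lemma). Then whenever v ←_s u →_s w there exists u' such that v →_s u' ←_s w. -/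
/-- One-hole contexts over applicative terms. -/
inductive Ctx (Sig V : Type*) : Type _
  | hole : Ctx Sig V
  | appL : Ctx Sig V → Tm Sig V → Ctx Sig V
  | appR : Tm Sig V → Ctx Sig V → Ctx Sig V

/-- Filling the hole of a one-hole context. -/
def Ctx.fill {Sig V : Type*} : Ctx Sig V → Tm Sig V → Tm Sig V
  | .hole, t => t
  | .appL C s, t => .app (Ctx.fill C t) s
  | .appR s C, t => .app s (Ctx.fill C t)

/-- A bounded reduction step under the bound `s`: replace a subterm `a` with
`s ≻ a` by an `→_R*`-reduct `b` with `s ≻ b`. -/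
def BStep {Sig V : Type*} (Rw succ : Tm Sig V → Tm Sig V → Prop)
    (s u v : Tm Sig V) : Prop :=
  ∃ (C : Ctx Sig V) (a b : Tm Sig V),
    u = C.fill a ∧ v = C.fill b ∧ succ s a ∧ succ s b ∧ Relation.ReflTransGen Rw a b

/-!
Locate the two redexes of the peak `C₁[b₁] ← C₁[a₁] = C₂[a₂] → C₂[b₂]`. If their positions are
parallel, the two steps act on disjoint subterms and simply commute. If one is nested in the other,
say `a₁ = D[a₂]`, then `b₁` and `D[b₂]` are both `→_R*`-reducts of `a₁ ≺ s`, so the minimality of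
`s` gives a common reduct `q`; it stays below `s` because `≻` is compatible with `⪰ ⊇ →_R*`, and
`C₁[q]` closes the peak.
-/

namespace Ctx

variable {Sig V : Type*}

def comp : Ctx Sig V → Ctx Sig V → Ctx Sig V
  | .hole, D => D
  | .appL C t, D => .appL (comp C D) t
  | .appR t C, D => .appR t (comp C D)

@[simp]
theorem fill_comp (C D : Ctx Sig V) (t : Tm Sig V) : (C.comp D).fill t = C.fill (D.fill t) := by
  induction C with
  | hole => rfl
  | appL C s ih => simp only [comp, fill, ih]
  | appR s C ih => simp only [comp, fill, ih]

/-- In the parallel case `K₁ y` is the context of the first occurrence once `y` has been put in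
place of the second one, and `K₂ x` vice versa. -/
theorem nested_or_parallel_of_fill_eq {C₁ C₂ : Ctx Sig V} {a₁ a₂ : Tm Sig V}
    (h : C₁.fill a₁ = C₂.fill a₂) :
    (∃ D, C₂ = C₁.comp D ∧ a₁ = D.fill a₂) ∨
    (∃ D, C₁ = C₂.comp D ∧ a₂ = D.fill a₁) ∨
    (∃ K₁ K₂ : Tm Sig V → Ctx Sig V,
      (∀ x y, (K₁ y).fill x = (K₂ x).fill y) ∧ C₁ = K₁ a₂ ∧ C₂ = K₂ a₁) := by
  induction C₁ generalizing C₂ with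
  | hole => exact .inl ⟨C₂, rfl, h⟩
  | appL C t ih =>
    cases C₂ with
    | hole => exact .inr (.inl ⟨.appL C t, rfl, h.symm⟩)
    | appL C' t' =>
      obtain ⟨hC, rfl⟩ := Tm.app.inj (by simpa only [fill] using h)
      rcases ih hC with ⟨D, rfl, ha⟩ | ⟨D, rfl, ha⟩ | ⟨K₁, K₂, hK, rfl, rfl⟩
      · exact .inl ⟨D, rfl, ha⟩
      · exact .inr (.inl ⟨D, rfl, ha⟩)
      · exact .inr (.inr ⟨fun y => .appL (K₁ y) t, fun x => .appL (K₂ x) t,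
          fun x y => by simp only [fill, hK], rfl, rfl⟩)
    | appR t' C' =>
      obtain ⟨rfl, rfl⟩ := Tm.app.inj (by simpa only [fill] using h)
      exact .inr (.inr ⟨fun y => .appL C (C'.fill y), fun x => .appR (C.fill x) C',
        fun _ _ => rfl, rfl, rfl⟩)
  | appR t C ih =>
    cases C₂ with
    | hole => exact .inr (.inl ⟨.appR t C, rfl, h.symm⟩)
    | appL C' t' =>
      obtain ⟨rfl, rfl⟩ := Tm.app.inj (by simpa only [fill] using h)
      exact .inr (.inr ⟨fun y => .appR (C'.fill y) C, fun x => .appL C' (C.fill x),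
        fun _ _ => rfl, rfl, rfl⟩)
    | appR t' C' =>
      obtain ⟨rfl, hC⟩ := Tm.app.inj (by simpa only [fill] using h)
      rcases ih hC with ⟨D, rfl, ha⟩ | ⟨D, rfl, ha⟩ | ⟨K₁, K₂, hK, rfl, rfl⟩
      · exact .inl ⟨D, rfl, ha⟩
      · exact .inr (.inl ⟨D, rfl, ha⟩)
      · exact .inr (.inr ⟨fun y => .appR t (K₁ y), fun x => .appR t (K₂ x),
          fun x y => by simp only [fill, hK], rfl, rfl⟩)

theorem reflTransGen_fill {Rw : Tm Sig V → Tm Sig V → Prop}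
    (hctx : ∀ (C : Ctx Sig V) a b, Rw a b → Rw (C.fill a) (C.fill b))
    (C : Ctx Sig V) {a b : Tm Sig V} (h : Relation.ReflTransGen Rw a b) :
    Relation.ReflTransGen Rw (C.fill a) (C.fill b) :=
  Relation.ReflTransGen.lift C.fill (hctx C) a b h

end Ctx

section BoundedStep

variable {Sig V : Type*} {Rw succ : Tm Sig V → Tm Sig V → Prop} {s : Tm Sig V}

open Relation

theorem succ_of_reflTransGen {succeq : Tm Sig V → Tm Sig V → Prop}
    (hrefl : ∀ a, succeq a a) (heqtrans : ∀ a b c, succeq a b → succeq b c → succeq a c)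
    (hcompat₁ : ∀ a b c, succ a b → succeq b c → succ a c) (hRw : ∀ a b, Rw a b → succeq a b)
    {a b c : Tm Sig V} (hab : succ a b) (hbc : ReflTransGen Rw b c) : succ a c :=
  have : Std.Refl succeq := ⟨hrefl⟩
  have : IsTrans _ succeq := ⟨heqtrans⟩
  hcompat₁ a b c hab (reflTransGen_le_of_le hRw b c hbc)

theorem bStep_fill (C : Ctx Sig V) {a b : Tm Sig V} (ha : succ s a) (hb : succ s b)
    (hab : ReflTransGen Rw a b) : BStep Rw succ s (C.fill a) (C.fill b) :=
  ⟨C, a, b, rfl, rfl, ha, hb, hab⟩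

theorem bStep_join_of_nested
    (hctx : ∀ (C : Ctx Sig V) a b, Rw a b → Rw (C.fill a) (C.fill b))
    (hclosed : ∀ b c, succ s b → ReflTransGen Rw b c → succ s c)
    (C D : Ctx Sig V) {a₂ b₁ b₂ : Tm Sig V}
    (hjoin : ∀ q₁ q₂, ReflTransGen Rw (D.fill a₂) q₁ → ReflTransGen Rw (D.fill a₂) q₂ →
      Join (ReflTransGen Rw) q₁ q₂)
    (ha₁ : succ s (D.fill a₂)) (hb₁ : succ s b₁) (hab₁ : ReflTransGen Rw (D.fill a₂) b₁)
    (hab₂ : ReflTransGen Rw a₂ b₂) :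
    Join (BStep Rw succ s) (C.fill b₁) ((C.comp D).fill b₂) := by
  have hab₂' := Ctx.reflTransGen_fill hctx D hab₂
  obtain ⟨q, hb₁q, hb₂q⟩ := hjoin b₁ (D.fill b₂) hab₁ hab₂'
  have hq := hclosed b₁ q hb₁ hb₁q
  rw [Ctx.fill_comp]
  exact ⟨C.fill q, bStep_fill C hb₁ hq hb₁q,
    bStep_fill C (hclosed _ _ ha₁ hab₂') hq hb₂q⟩

theorem bStep_join_of_parallel {K₁ K₂ : Tm Sig V → Ctx Sig V}
    (hK : ∀ x y, (K₁ y).fill x = (K₂ x).fill y) {a₁ b₁ a₂ b₂ : Tm Sig V}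
    (ha₁ : succ s a₁) (hb₁ : succ s b₁) (hab₁ : ReflTransGen Rw a₁ b₁)
    (ha₂ : succ s a₂) (hb₂ : succ s b₂) (hab₂ : ReflTransGen Rw a₂ b₂) :
    Join (BStep Rw succ s) ((K₁ a₂).fill b₁) ((K₂ a₁).fill b₂) := by
  refine ⟨(K₁ b₂).fill b₁, ?_, ?_⟩
  · rw [hK, hK]
    exact bStep_fill (K₂ b₁) ha₂ hb₂ hab₂
  · rw [← hK]
    exact bStep_fill (K₁ b₂) ha₁ hb₁ hab₁

end BoundedStep

theorem bounded_peak_commutation_general {Sig V : Type*}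
    (Rw succ succeq : Tm Sig V → Tm Sig V → Prop)
    (hctx : ∀ (C : Ctx Sig V) a b, Rw a b → Rw (C.fill a) (C.fill b))
    (hrefl : ∀ a, succeq a a)
    (heqtrans : ∀ a b c, succeq a b → succeq b c → succeq a c)
    (hcompat₁ : ∀ a b c, succ a b → succeq b c → succ a c)
    (hRw : ∀ a b, Rw a b → succeq a b)
    (s : Tm Sig V)
    (hmin : ∀ r, (succ s r ∨ Relation.TransGen Rw s r) →
      ∀ q₁ q₂, Relation.ReflTransGen Rw r q₁ → Relation.ReflTransGen Rw r q₂ →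
        ∃ q, Relation.ReflTransGen Rw q₁ q ∧ Relation.ReflTransGen Rw q₂ q)
    (u v w : Tm Sig V)
    (huv : BStep Rw succ s u v) (huw : BStep Rw succ s u w) :
    ∃ u', BStep Rw succ s v u' ∧ BStep Rw succ s w u' := by
  have hclosed : ∀ b c, succ s b → Relation.ReflTransGen Rw b c → succ s c :=
    fun _ _ => succ_of_reflTransGen hrefl heqtrans hcompat₁ hRw
  obtain ⟨C₁, a₁, b₁, rfl, rfl, ha₁, hb₁, hab₁⟩ := huv
  obtain ⟨C₂, a₂, b₂, hu, rfl, ha₂, hb₂, hab₂⟩ := huw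
  rcases Ctx.nested_or_parallel_of_fill_eq hu with
    ⟨D, rfl, rfl⟩ | ⟨D, rfl, rfl⟩ | ⟨K₁, K₂, hK, rfl, rfl⟩
  · exact bStep_join_of_nested hctx hclosed C₁ D (hmin _ (.inl ha₁)) ha₁ hb₁ hab₁ hab₂
  · exact symm (bStep_join_of_nested hctx hclosed C₂ D (hmin _ (.inl ha₂)) ha₂ hb₂ hab₂ hab₁)
  · exact bStep_join_of_parallel hK ha₁ hb₁ hab₁ ha₂ hb₂ hab₂

/-- Peak commutation for bounded reduction below a minimal counterexample `s`:
if `→_R` is terminating, `(≻,⪰)` is a bounding pair, and every term strictly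
below `s` (w.r.t. `≻` or reachable by `→_R⁺`) is confluent, then
`←_s · →_s ⊆ →_s · ←_s`. -/
theorem bounded_peak_commutation {Sig V : Type*}
    (Rw succ succeq : Tm Sig V → Tm Sig V → Prop)
    (hterm : WellFounded (fun a b => Rw b a))
    (hctx : ∀ (C : Ctx Sig V) a b, Rw a b → Rw (C.fill a) (C.fill b))
    (hwf : WellFounded (fun a b => succ b a))
    (htrans : ∀ a b c, succ a b → succ b c → succ a c)
    (hirr : ∀ a, ¬ succ a a)
    (hrefl : ∀ a, succeq a a)
    (heqtrans : ∀ a b c, succeq a b → succeq b c → succeq a c)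
    (hsub : ∀ a b, succ a b → succeq a b)
    (hcompat₁ : ∀ a b c, succ a b → succeq b c → succ a c)
    (hcompat₂ : ∀ a b c, succeq a b → succ b c → succ a c)
    (hRw : ∀ a b, Rw a b → succeq a b)
    (hsubL : ∀ a b : Tm Sig V, succeq (Tm.app a b) a)
    (hsubR : ∀ a b : Tm Sig V, succeq (Tm.app a b) b)
    (s : Tm Sig V)
    (hmin : ∀ r, (succ s r ∨ Relation.TransGen Rw s r) →
      ∀ q₁ q₂, Relation.ReflTransGen Rw r q₁ → Relation.ReflTransGen Rw r q₂ →
        ∃ q, Relation.ReflTransGen Rw q₁ q ∧ Relation.ReflTransGen Rw q₂ q)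
    (u v w : Tm Sig V)
    (huv : BStep Rw succ s u v) (huw : BStep Rw succ s u w) :
    ∃ u', BStep Rw succ s v u' ∧ BStep Rw succ s w u' :=
  bounded_peak_commutation_general Rw succ succeq hctx hrefl heqtrans hcompat₁ hRw s hmin u v w huv
    huw
end

section
/- If an abstract rewriting system is terminating and every element has the property that all its one-step peaks arising from 'critical' situations are convertible via a bounded conversion (each conversion step uses redexes strictly smaller than the source with respect to a well-founded relation compatible with reduction), and all non-critical peaks are directly joinable, then the system is confluent. -/
/-- A single bounded conversion step with bound `s`: a subterm `a` with
`s ≻ a` is replaced by `b` with `s ≻ b`, where `a →* b` or `b →* a`. -/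
def BConvStep {Sig V : Type*} (Rw succ : Tm Sig V → Tm Sig V → Prop)
    (s u v : Tm Sig V) : Prop :=
  ∃ (C : Ctx Sig V) (a b : Tm Sig V),
    u = C.fill a ∧ v = C.fill b ∧ succ s a ∧ succ s b ∧
    (Relation.ReflTransGen Rw a b ∨ Relation.ReflTransGen Rw b a)

open Relation

theorem WellFounded.or {α : Type*} {r s : α → α → Prop} (hr : WellFounded r)
    (hs : WellFounded s) (h : ∀ a b c, s b a → r c b → r c a) :
    WellFounded fun x y => r x y ∨ s x y := by
  refine ⟨fun a => ?_⟩
  induction a using hr.induction with | _ a ihr => ?_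
  induction a using hs.induction with | _ a ihs => ?_
  exact ⟨_, fun b hb =>
    hb.elim (ihr b) fun hba => ihs b hba fun c hcb => ihr c (h a b c hba hcb)⟩

section Abstract

variable {α : Type*} {r : α → α → Prop}

def ConfluentAt (r : α → α → Prop) (s : α) : Prop :=
  ∀ t q, ReflTransGen r s t → ReflTransGen r s q → Join (ReflTransGen r) t q

theorem confluentAt_of_forall_peak {s : α} (hsucc : ∀ t, r s t → ConfluentAt r t)
    (hpeak : ∀ t₁ t₂, r s t₁ → r s t₂ → Join (ReflTransGen r) t₁ t₂) :
    ConfluentAt r s := by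
  intro t q ht hq
  rcases ht.cases_head with rfl | ⟨t₁, hst₁, ht₁t⟩
  · exact ⟨q, hq, .refl⟩
  rcases hq.cases_head with rfl | ⟨q₁, hsq₁, hq₁q⟩
  · exact ⟨t, .refl, ht⟩
  obtain ⟨u, ht₁u, hq₁u⟩ := hpeak t₁ q₁ hst₁ hsq₁
  obtain ⟨v, htv, huv⟩ := hsucc t₁ hst₁ t u ht₁t ht₁u
  obtain ⟨w, hqw, hvw⟩ := hsucc q₁ hsq₁ q v hq₁q (hq₁u.trans huv)
  exact ⟨w, htv.trans hvw, hqw⟩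

theorem lt_of_lt_of_reflTransGen {lt : α → α → Prop}
    (hdown : ∀ a b c, lt a b → r b c → lt a c) {s a b : α} (hsa : lt s a)
    (hab : ReflTransGen r a b) : lt s b := by
  induction hab with
  | refl => exact hsa
  | tail _ hbc ih => exact hdown _ _ _ ih hbc

end Abstract

namespace Ctx

variable {Sig V : Type*}

theorem fill_reflTransGen {Rw : Tm Sig V → Tm Sig V → Prop}
    (hctx : ∀ (C : Ctx Sig V) a b, Rw a b → Rw (C.fill a) (C.fill b))
    (C : Ctx Sig V) {a b : Tm Sig V} (h : ReflTransGen Rw a b) :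
    ReflTransGen Rw (C.fill a) (C.fill b) :=
  h.lift C.fill fun a b => hctx C a b

def Closure (L : Tm Sig V → Tm Sig V → Prop) (u v : Tm Sig V) : Prop :=
  ∃ (C : Ctx Sig V) (a b : Tm Sig V), u = C.fill a ∧ v = C.fill b ∧ L a b

def JoinsNestedPeaks (L : Tm Sig V → Tm Sig V → Prop) : Prop :=
  ∀ (E : Ctx Sig V) a b₁ b₂, L (E.fill a) b₁ → L a b₂ → ∃ w, L b₁ w ∧ L (E.fill b₂) w

variable {L : Tm Sig V → Tm Sig V → Prop}

theorem Closure.of_rel {a b : Tm Sig V} (h : L a b) : Closure L a b :=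
  ⟨.hole, a, b, rfl, rfl, h⟩

theorem Closure.appL {u v : Tm Sig V} (h : Closure L u v) (t : Tm Sig V) :
    Closure L (.app u t) (.app v t) := by
  obtain ⟨C, a, b, rfl, rfl, hab⟩ := h
  exact ⟨.appL C t, a, b, rfl, rfl, hab⟩

theorem Closure.appR {u v : Tm Sig V} (t : Tm Sig V) (h : Closure L u v) :
    Closure L (.app t u) (.app t v) := by
  obtain ⟨C, a, b, rfl, rfl, hab⟩ := h
  exact ⟨.appR t C, a, b, rfl, rfl, hab⟩

theorem Closure.exists_of_fill_eq_fill (hnest : JoinsNestedPeaks L) :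
    ∀ (C₁ C₂ : Ctx Sig V) {a₁ a₂ b₁ b₂ : Tm Sig V}, C₁.fill a₁ = C₂.fill a₂ →
      L a₁ b₁ → L a₂ b₂ → ∃ w, Closure L (C₁.fill b₁) w ∧ Closure L (C₂.fill b₂) w := by
  have nested : ∀ (E : Ctx Sig V) {a b₁ b₂}, L (E.fill a) b₁ → L a b₂ →
      ∃ w, Closure L b₁ w ∧ Closure L (E.fill b₂) w := fun E _ _ _ h₁ h₂ =>
    let ⟨w, hw₁, hw₂⟩ := hnest E _ _ _ h₁ h₂
    ⟨w, .of_rel hw₁, .of_rel hw₂⟩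
  intro C₁
  induction C₁ with
  | hole =>
    rintro C₂ a₁ a₂ b₁ b₂ (rfl : a₁ = _) h₁ h₂
    exact nested C₂ h₁ h₂
  | appL C t ih =>
    intro C₂ a₁ a₂ b₁ b₂ h h₁ h₂
    cases C₂ with
    | hole =>
      obtain rfl : (Ctx.appL C t).fill a₁ = a₂ := h
      obtain ⟨w, hw₂, hw₁⟩ := nested _ h₂ h₁
      exact ⟨w, hw₁, hw₂⟩
    | appL C' t' =>
      obtain ⟨hC, rfl⟩ := Tm.app.inj h
      obtain ⟨w, hw₁, hw₂⟩ := ih C' hC h₁ h₂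
      exact ⟨.app w t, hw₁.appL t, hw₂.appL t⟩
    | appR t' C' =>
      obtain ⟨rfl, rfl⟩ := Tm.app.inj h
      exact ⟨.app (C.fill b₁) (C'.fill b₂), ⟨.appR _ C', a₂, b₂, rfl, rfl, h₂⟩,
        ⟨.appL C _, a₁, b₁, rfl, rfl, h₁⟩⟩
  | appR t C ih =>
    intro C₂ a₁ a₂ b₁ b₂ h h₁ h₂
    cases C₂ with
    | hole =>
      obtain rfl : (Ctx.appR t C).fill a₁ = a₂ := h
      obtain ⟨w, hw₂, hw₁⟩ := nested _ h₂ h₁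
      exact ⟨w, hw₁, hw₂⟩
    | appL C' t' =>
      obtain ⟨rfl, rfl⟩ := Tm.app.inj h
      exact ⟨.app (C'.fill b₂) (C.fill b₁), ⟨.appL C' _, a₂, b₂, rfl, rfl, h₂⟩,
        ⟨.appR _ C, a₁, b₁, rfl, rfl, h₁⟩⟩
    | appR t' C' =>
      obtain ⟨rfl, hC⟩ := Tm.app.inj h
      obtain ⟨w, hw₁, hw₂⟩ := ih C' hC h₁ h₂
      exact ⟨.app t w, hw₁.appR t, hw₂.appR t⟩

theorem Closure.equivalence_join_reflTransGen (hnest : JoinsNestedPeaks L) :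
    Equivalence (Join (ReflTransGen (Closure L))) :=
  Relation.equivalence_join_reflTransGen
    fun _ _ _ ⟨C₁, _, _, hu, hv₁, h₁⟩ ⟨C₂, _, _, hu', hv₂, h₂⟩ =>
      let ⟨w, hw₁, hw₂⟩ := exists_of_fill_eq_fill hnest C₁ C₂ (hu.symm.trans hu') h₁ h₂
      ⟨w, hv₁ ▸ .single hw₁, hv₂ ▸ .single hw₂⟩

end Ctx

section Bounded

variable {Sig V : Type*} {Rw succ : Tm Sig V → Tm Sig V → Prop}

def BoundedReduct (Rw succ : Tm Sig V → Tm Sig V → Prop) (s a b : Tm Sig V) : Prop :=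
  succ s a ∧ succ s b ∧ ReflTransGen Rw a b

theorem join_of_reflTransGen_bConvStep
    (hctx : ∀ (C : Ctx Sig V) a b, Rw a b → Rw (C.fill a) (C.fill b))
    (hdown : ∀ a b c, succ a b → Rw b c → succ a c) {s : Tm Sig V}
    (hconf : ∀ a, succ s a → ConfluentAt Rw a) {t₁ t₂ : Tm Sig V}
    (h : ReflTransGen (BConvStep Rw succ s) t₁ t₂) : Join (ReflTransGen Rw) t₁ t₂ := by
  set L := BoundedReduct Rw succ s
  have hnest : Ctx.JoinsNestedPeaks L := by
    rintro E a b₁ b₂ ⟨hsa, hsb₁, hab₁⟩ ⟨-, -, hab₂⟩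
    have hab₂' := Ctx.fill_reflTransGen hctx E hab₂
    obtain ⟨w, hb₁w, hb₂w⟩ := hconf _ hsa _ _ hab₁ hab₂'
    have hsw := lt_of_lt_of_reflTransGen hdown hsb₁ hb₁w
    exact ⟨w, ⟨hsb₁, hsw, hb₁w⟩, lt_of_lt_of_reflTransGen hdown hsa hab₂', hsw, hb₂w⟩
  have hequiv := Ctx.Closure.equivalence_join_reflTransGen hnest
  have hstep : BConvStep Rw succ s ≤ Join (ReflTransGen (Ctx.Closure L)) := by
    rintro u v ⟨C, a, b, rfl, rfl, ha, hb, hab | hba⟩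
    · exact le_join_of_refl _ _ (.single ⟨C, a, b, rfl, rfl, ha, hb, hab⟩)
    · exact hequiv.symm (le_join_of_refl _ _ (.single ⟨C, b, a, rfl, rfl, hb, ha, hba⟩))
  obtain ⟨w, h₁, h₂⟩ := reflTransGen_le_of_equivalence_of_le hequiv hstep _ _ h
  have hred : ReflTransGen (Ctx.Closure L) ≤ ReflTransGen Rw :=
    reflTransGen_closed fun _ _ ⟨C, _, _, hu, hv, _, _, hab⟩ =>
      hu ▸ hv ▸ Ctx.fill_reflTransGen hctx C hab
  exact ⟨w, hred _ _ h₁, hred _ _ h₂⟩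

end Bounded

theorem critical_peaks_bounded_convertible_confluent_general {Sig V : Type*}
    (Rw succ succeq : Tm Sig V → Tm Sig V → Prop)
    (CP : Tm Sig V → Tm Sig V → Tm Sig V → Prop)
    (hterm : WellFounded (fun a b => Rw b a))
    (hctx : ∀ (C : Ctx Sig V) a b, Rw a b → Rw (C.fill a) (C.fill b))
    (hwf : WellFounded (fun a b => succ b a))
    (hcompat₁ : ∀ a b c, succ a b → succeq b c → succ a c)
    (hcompat₂ : ∀ a b c, succeq a b → succ b c → succ a c)
    (hRw : ∀ a b, Rw a b → succeq a b)
    (hpeak : ∀ s t₁ t₂, Rw s t₁ → Rw s t₂ →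
      (∃ t, Relation.ReflTransGen Rw t₁ t ∧ Relation.ReflTransGen Rw t₂ t) ∨ CP s t₁ t₂)
    (hconv : ∀ s t₁ t₂, CP s t₁ t₂ →
      Relation.ReflTransGen (BConvStep Rw succ s) t₁ t₂) :
    ∀ s t q, Relation.ReflTransGen Rw s t → Relation.ReflTransGen Rw s q →
      ∃ w, Relation.ReflTransGen Rw t w ∧ Relation.ReflTransGen Rw q w := by
  have hdown : ∀ a b c, succ a b → Rw b c → succ a c :=
    fun a b c hab hbc => hcompat₁ a b c hab (hRw b c hbc)
  have hbelow : WellFounded fun a b => succ b a ∨ Rw b a :=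
    hwf.or hterm fun a b c hab hbc => hcompat₂ a b c (hRw a b hab) hbc
  intro s
  induction s using hbelow.induction with | _ s IH => ?_
  refine confluentAt_of_forall_peak (fun t hst => IH t (.inr hst)) fun t₁ t₂ h₁ h₂ => ?_
  rcases hpeak s t₁ t₂ h₁ h₂ with hjoin | hcp
  · exact hjoin
  · exact join_of_reflTransGen_bConvStep hctx hdown (fun a ha => IH a (.inl ha))
      (hconv s t₁ t₂ hcp)

/-- Abstract Ground Critical Peak Theorem: a terminating rewrite relation in
which every non-joinable one-step peak is a critical-peak instance, and all
critical-peak instances are convertible by conversions bounded strictly below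
the peak source (w.r.t. a bounding pair `(≻,⪰)` with `→_R ∪ ▷ ⊆ ⪰`), is
confluent. -/
theorem critical_peaks_bounded_convertible_confluent {Sig V : Type*}
    (Rw succ succeq : Tm Sig V → Tm Sig V → Prop)
    (CP : Tm Sig V → Tm Sig V → Tm Sig V → Prop)
    (hterm : WellFounded (fun a b => Rw b a))
    (hctx : ∀ (C : Ctx Sig V) a b, Rw a b → Rw (C.fill a) (C.fill b))
    (hwf : WellFounded (fun a b => succ b a))
    (htrans : ∀ a b c, succ a b → succ b c → succ a c)
    (hirr : ∀ a, ¬ succ a a)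
    (hrefl : ∀ a, succeq a a)
    (heqtrans : ∀ a b c, succeq a b → succeq b c → succeq a c)
    (hsub : ∀ a b, succ a b → succeq a b)
    (hcompat₁ : ∀ a b c, succ a b → succeq b c → succ a c)
    (hcompat₂ : ∀ a b c, succeq a b → succ b c → succ a c)
    (hRw : ∀ a b, Rw a b → succeq a b)
    (hsubL : ∀ a b : Tm Sig V, succeq (Tm.app a b) a)
    (hsubR : ∀ a b : Tm Sig V, succeq (Tm.app a b) b)
    (hpeak : ∀ s t₁ t₂, Rw s t₁ → Rw s t₂ →
      (∃ t, Relation.ReflTransGen Rw t₁ t ∧ Relation.ReflTransGen Rw t₂ t) ∨ CP s t₁ t₂)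
    (hconv : ∀ s t₁ t₂, CP s t₁ t₂ →
      Relation.ReflTransGen (BConvStep Rw succ s) t₁ t₂) :
    ∀ s t q, Relation.ReflTransGen Rw s t → Relation.ReflTransGen Rw s q →
      ∃ w, Relation.ReflTransGen Rw t w ∧ Relation.ReflTransGen Rw q w :=
  critical_peaks_bounded_convertible_confluent_general Rw succ succeq CP hterm hctx hwf hcompat₁
    hcompat₂ hRw hpeak hconv
end

section
/- Lifting lemma for rewriting under substitutions: if sγ →_R t for a term s, substitution γ, and finite variable set X ⊇ Vars(s), then either (i) there exist a substitution δ agreeing with γ on X, a renamed rule ℓ → r [φ] with variables disjoint from X such that δ respects φ, a non-variable position p of s with s|_p δ = ℓδ and t = s[r]_p δ; or (ii) there exist a variable x ∈ Vars(s) and a substitution γ' with γ(x) →_R γ'(x), γ'(y) = γ(y) for y ≠ x, and t →_R* sγ'. -/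
/-- Applying a substitution to a term. -/
def Tm.subst {Sig V : Type*} (γ : V → Tm Sig V) : Tm Sig V → Tm Sig V
  | .sym f => .sym f
  | .var x => γ x
  | .app s t => .app (Tm.subst γ s) (Tm.subst γ t)

/-- The set of variables of a term. -/
def Tm.vars {Sig V : Type*} : Tm Sig V → Set V
  | .sym _ => ∅
  | .var x => {x}
  | .app s t => Tm.vars s ∪ Tm.vars t

/-- One-step rewriting with the (unconstrained) rules `R`, in any context. -/
def Rewrites {Sig V : Type*} (R : Set (Tm Sig V × Tm Sig V))
    (s t : Tm Sig V) : Prop :=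
  ∃ (C : Ctx Sig V) (l r : Tm Sig V) (γ : V → Tm Sig V),
    (l, r) ∈ R ∧ s = C.fill (Tm.subst γ l) ∧ t = C.fill (Tm.subst γ r)

/-!
Walk down `s` along the context of the redex in `sγ`. Either the redex is met at a
non-variable subterm `s'` of `s`, so that `s'γ = ℓσ`; renaming the rule apart from `X`
lets `γ` and `σ` be merged into a single substitution `δ` with `s'δ = ℓδ`. Or the walk
reaches a variable `x` of `s` first, so the step takes place inside `γ(x)`; replacing
`γ(x)` by its reduct at every occurrence of `x` then joins `t` with `sγ'`.
-/

namespace Ctx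

variable {Sig V : Type*}

def subst (γ : V → Tm Sig V) : Ctx Sig V → Ctx Sig V
  | .hole => .hole
  | .appL C t => .appL (C.subst γ) (t.subst γ)
  | .appR t C => .appR (t.subst γ) (C.subst γ)

theorem vars_subset_vars_fill (D : Ctx Sig V) (v : Tm Sig V) :
    v.vars ⊆ (D.fill v).vars := by
  induction D with
  | hole => exact subset_rfl
  | appL C t ih => exact ih.trans Set.subset_union_left
  | appR t C ih => exact ih.trans Set.subset_union_right

end Ctx

namespace Tm

variable {Sig V : Type*}

theorem subst_fill (σ : V → Tm Sig V) (D : Ctx Sig V) (v : Tm Sig V) :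
    (D.fill v).subst σ = (D.subst σ).fill (v.subst σ) := by
  induction D with
  | hole => rfl
  | appL C t ih => simp [Ctx.fill, Ctx.subst, Tm.subst, ih]
  | appR t C ih => simp [Ctx.fill, Ctx.subst, Tm.subst, ih]

theorem subst_subst (δ σ : V → Tm Sig V) (u : Tm Sig V) :
    (u.subst σ).subst δ = u.subst (fun x => (σ x).subst δ) := by
  induction u with
  | sym f => rfl
  | var x => rfl
  | app a b iha ihb => simp [Tm.subst, iha, ihb]

theorem subst_congr {δ γ : V → Tm Sig V} {u : Tm Sig V}
    (h : ∀ y ∈ u.vars, δ y = γ y) : u.subst δ = u.subst γ := by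
  induction u with
  | sym f => rfl
  | var x => exact h x rfl
  | app a b iha ihb =>
    simp only [Tm.subst]
    rw [iha fun y hy => h y (Or.inl hy), ihb fun y hy => h y (Or.inr hy)]

theorem vars_rename_subset (ρ : V → V) (u : Tm Sig V) :
    (u.subst fun x => .var (ρ x)).vars ⊆ Set.range ρ := by
  induction u with
  | sym f => exact Set.empty_subset _
  | var x => exact Set.singleton_subset_iff.mpr ⟨x, rfl⟩
  | app a b iha ihb => exact Set.union_subset iha ihb

theorem subst_eq_fill_cases (s : Tm Sig V) (γ : V → Tm Sig V) (C : Ctx Sig V)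
    (u : Tm Sig V) (h : s.subst γ = C.fill u) :
    (∃ (D : Ctx Sig V) (s' : Tm Sig V), s = D.fill s' ∧ (∀ y, s' ≠ .var y) ∧
      s'.subst γ = u ∧ C = D.subst γ) ∨
    (∃ (D : Ctx Sig V) (x : V) (C' : Ctx Sig V), s = D.fill (.var x) ∧
      γ x = C'.fill u ∧ ∀ v, C.fill v = (D.subst γ).fill (C'.fill v)) := by
  induction s generalizing C with
  | var x => exact Or.inr ⟨.hole, x, C, rfl, h, fun _ => rfl⟩
  | sym f =>
    cases C with
    | hole => exact Or.inl ⟨.hole, .sym f, rfl, fun _ => nofun, h, rfl⟩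
    | appL | appR => simp [Tm.subst, Ctx.fill] at h
  | app s₁ s₂ ih₁ ih₂ =>
    cases C with
    | hole => exact Or.inl ⟨.hole, .app s₁ s₂, rfl, fun _ => nofun, h, rfl⟩
    | appL C₁ w =>
      simp only [Tm.subst, Ctx.fill, Tm.app.injEq] at h
      obtain ⟨h₁, rfl⟩ := h
      rcases ih₁ C₁ h₁ with ⟨D, s', rfl, hnv, hu, rfl⟩ | ⟨D, x, C', rfl, hx, hfill⟩
      · exact Or.inl ⟨.appL D s₂, s', rfl, hnv, hu, rfl⟩
      · exact Or.inr ⟨.appL D s₂, x, C', rfl, hx, fun v => by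
          simp [Ctx.fill, Ctx.subst, hfill v]⟩
    | appR w C₂ =>
      simp only [Tm.subst, Ctx.fill, Tm.app.injEq] at h
      obtain ⟨rfl, h₂⟩ := h
      rcases ih₂ C₂ h₂ with ⟨D, s', rfl, hnv, hu, rfl⟩ | ⟨D, x, C', rfl, hx, hfill⟩
      · exact Or.inl ⟨.appR s₁ D, s', rfl, hnv, hu, rfl⟩
      · exact Or.inr ⟨.appR s₁ D, x, C', rfl, hx, fun v => by
          simp [Ctx.fill, Ctx.subst, hfill v]⟩

end Tm

theorem Ctx.subst_congr {Sig V : Type*} {δ γ : V → Tm Sig V} (D : Ctx Sig V)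
    (v : Tm Sig V) (h : ∀ y ∈ (D.fill v).vars, δ y = γ y) : D.subst δ = D.subst γ := by
  induction D with
  | hole => rfl
  | appL C t ih =>
    simp only [Ctx.subst]
    rw [ih fun y hy => h y (Or.inl hy), Tm.subst_congr fun y hy => h y (Or.inr hy)]
  | appR t C ih =>
    simp only [Ctx.subst]
    rw [ih fun y hy => h y (Or.inr hy), Tm.subst_congr fun y hy => h y (Or.inl hy)]

theorem exists_injective_forall_notMem {V : Type*} [Infinite V] {X : Set V}
    (hX : X.Finite) : ∃ ρ : V → V, Function.Injective ρ ∧ ∀ y, ρ y ∉ X := by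
  have hlt : Cardinal.mk X < Cardinal.mk V :=
    hX.lt_aleph0.trans_le (Cardinal.aleph0_le_mk V)
  obtain ⟨f⟩ := Cardinal.le_def V (Xᶜ : Set V) |>.mp (Cardinal.mk_compl_of_infinite X hlt).ge
  exact ⟨fun y => f y, Subtype.val_injective.comp f.injective, fun y => (f y).2⟩

theorem exists_rename_apart {Sig V : Type*} [Infinite V] {X : Set V} (hX : X.Finite)
    (γ σ : V → Tm Sig V) :
    ∃ (ρ : V → V) (δ : V → Tm Sig V), Function.Injective ρ ∧ (∀ y, ρ y ∉ X) ∧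
      (∀ x ∈ X, δ x = γ x) ∧
      ∀ u : Tm Sig V, (u.subst fun x => .var (ρ x)).subst δ = u.subst σ := by
  obtain ⟨ρ, hρ, hρX⟩ := exists_injective_forall_notMem hX
  refine ⟨ρ, Function.extend ρ σ γ, hρ, hρX, fun x hx => ?_, fun u => ?_⟩
  · exact Function.extend_apply' _ _ _ fun ⟨y, hy⟩ => hρX y (hy ▸ hx)
  · rw [Tm.subst_subst]
    exact Tm.subst_congr fun y _ => hρ.extend_apply σ γ y

namespace Rewrites

variable {Sig V : Type*} {R : Set (Tm Sig V × Tm Sig V)}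

theorem app_left {a a' : Tm Sig V} (b : Tm Sig V) (h : Rewrites R a a') :
    Rewrites R (.app a b) (.app a' b) := by
  obtain ⟨C, l, r, σ, hR, rfl, rfl⟩ := h
  exact ⟨.appL C b, l, r, σ, hR, rfl, rfl⟩

theorem app_right {b b' : Tm Sig V} (a : Tm Sig V) (h : Rewrites R b b') :
    Rewrites R (.app a b) (.app a b') := by
  obtain ⟨C, l, r, σ, hR, rfl, rfl⟩ := h
  exact ⟨.appR a C, l, r, σ, hR, rfl, rfl⟩

open Relation

theorem reflTransGen_app {a a' b b' : Tm Sig V} (ha : ReflTransGen (Rewrites R) a a')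
    (hb : ReflTransGen (Rewrites R) b b') :
    ReflTransGen (Rewrites R) (.app a b) (.app a' b') :=
  (ha.lift (Tm.app · b) fun _ _ => app_left b).trans
    (hb.lift (Tm.app a') fun _ _ => app_right a')

variable {γ γ' : V → Tm Sig V}

theorem reflTransGen_subst (h : ∀ y, ReflTransGen (Rewrites R) (γ y) (γ' y))
    (u : Tm Sig V) : ReflTransGen (Rewrites R) (u.subst γ) (u.subst γ') := by
  induction u with
  | sym f => exact .refl
  | var x => exact h x
  | app a b iha ihb => exact reflTransGen_app iha ihb

theorem reflTransGen_fill (h : ∀ y, ReflTransGen (Rewrites R) (γ y) (γ' y))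
    (D : Ctx Sig V) (w : Tm Sig V) :
    ReflTransGen (Rewrites R) ((D.subst γ).fill w) ((D.subst γ').fill w) := by
  induction D with
  | hole => exact .refl
  | appL C t ih => exact reflTransGen_app ih (reflTransGen_subst h t)
  | appR t C ih => exact reflTransGen_app (reflTransGen_subst h t) ih

theorem reflTransGen_update [DecidableEq V] {x : V} {w : Tm Sig V} (h : Rewrites R (γ x) w)
    (y : V) :
    ReflTransGen (Rewrites R) (γ y) (Function.update γ x w y) := by
  by_cases hy : y = x
  · subst hy
    simpa using ReflTransGen.single h
  · rw [Function.update_of_ne hy]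

end Rewrites

/-- Lifting lemma for rewriting under substitutions: if `sγ →_R t` and
`X ⊇ Vars(s)` is finite, then either (i) the step happens at a non-variable
position of `s`, using a renamed rule with variables disjoint from `X` and a
substitution `δ` agreeing with `γ` on `X`; or (ii) the step happens inside
`γ(x)` for some variable `x` of `s`, and `t →_R* sγ'` for the pointwise
updated substitution `γ'`. -/
theorem lifting_lemma {Sig V : Type*} [Infinite V]
    (R : Set (Tm Sig V × Tm Sig V))
    (s : Tm Sig V) (γ : V → Tm Sig V) (X : Set V) (hXfin : X.Finite)
    (hvars : Tm.vars s ⊆ X) (t : Tm Sig V)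
    (hstep : Rewrites R (Tm.subst γ s) t) :
    (∃ (δ : V → Tm Sig V) (l r l₀ r₀ : Tm Sig V) (ρ : V → V)
        (D : Ctx Sig V) (s' : Tm Sig V),
        (∀ x ∈ X, δ x = γ x) ∧
        (l₀, r₀) ∈ R ∧ Function.Injective ρ ∧
        l = Tm.subst (fun x => Tm.var (ρ x)) l₀ ∧
        r = Tm.subst (fun x => Tm.var (ρ x)) r₀ ∧
        (Tm.vars l ∪ Tm.vars r) ∩ X = ∅ ∧
        s = D.fill s' ∧ (∀ x, s' ≠ Tm.var x) ∧
        Tm.subst δ s' = Tm.subst δ l ∧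
        t = Tm.subst δ (D.fill r)) ∨
    (∃ (x : V) (γ' : V → Tm Sig V),
        x ∈ Tm.vars s ∧ Rewrites R (γ x) (γ' x) ∧
        (∀ y, y ≠ x → γ' y = γ y) ∧
        Relation.ReflTransGen (Rewrites R) t (Tm.subst γ' s)) := by
  classical
  obtain ⟨C, l₀, r₀, σ, hR, hs, rfl⟩ := hstep
  rcases Tm.subst_eq_fill_cases s γ C _ hs with
    ⟨D, s', rfl, hnv, hs', rfl⟩ | ⟨D, x, C', rfl, hx, hfill⟩
  · obtain ⟨ρ, δ, hρ, hρX, hδX, hδρ⟩ := exists_rename_apart hXfin γ σ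
    have hδs : ∀ y ∈ (D.fill s').vars, δ y = γ y := fun y hy => hδX y (hvars hy)
    refine Or.inl
      ⟨δ, _, _, l₀, r₀, ρ, D, s', hδX, hR, hρ, rfl, rfl, ?_, rfl, hnv, ?_, ?_⟩
    · refine Set.eq_empty_of_forall_notMem fun y ⟨hy, hyX⟩ => ?_
      obtain ⟨z, rfl⟩ := Set.union_subset (Tm.vars_rename_subset ρ l₀)
        (Tm.vars_rename_subset ρ r₀) hy
      exact hρX z hyX
    · rw [hδρ, ← hs']
      exact Tm.subst_congr fun y hy => hδs y (D.vars_subset_vars_fill s' hy)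
    · rw [Tm.subst_fill, hδρ, D.subst_congr s' hδs]
  · have hred : Rewrites R (γ x) (C'.fill (r₀.subst σ)) :=
      ⟨C', l₀, r₀, σ, hR, hx, rfl⟩
    refine Or.inr ⟨x, Function.update γ x _, D.vars_subset_vars_fill _ rfl,
      by rwa [Function.update_self], fun y hy => Function.update_of_ne hy _ _, ?_⟩
    rw [hfill, Tm.subst_fill, Tm.subst, Function.update_self]
    exact Rewrites.reflTransGen_fill (Rewrites.reflTransGen_update hred) D _
end

section
/- If B is a binary relation, S ⊆ B, ⪰ = B* and ≻ = B*·S·B*, then ≻ is well-founded if and only if there is no infinite B-sequence containing infinitely many S-steps. -/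
/-! If `≻` admits a descending chain, every `≻`-step is a finite `B`-path through an
`S`-step; splicing these paths gives the required sequence. The splicing is done by dependent
choice on pairs `(n, x)`, where the counter `n` is the number of `B`-steps left before the next
`S`-step: the counter drops at every step that is not an `S`-step, so `S`-steps recur forever.
Conversely, the indices of the `S`-steps of such a sequence cut it into a `≻`-descending chain. -/

variable {A : Type*}

/-- The strict relation `≻ = B* ∘ S ∘ B*` built from a base relation `B`
and its strict steps `S`. -/
def Gt (B S : A → A → Prop) (a b : A) : Prop :=
  ∃ u v, Relation.ReflTransGen B a u ∧ S u v ∧ Relation.ReflTransGen B v b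

open Relation

theorem exists_seq_of_forall_exists {α : Type*} {r : α → α → Prop} {X : Set α}
    (h : ∀ a ∈ X, ∃ b ∈ X, r a b) {a : α} (ha : a ∈ X) :
    ∃ s : ℕ → α, ∀ n, r (s n) (s (n + 1)) := by
  choose! g hgX hg using h
  have hmem : ∀ n, g^[n] a ∈ X := by
    intro n
    induction n with
    | zero => exact ha
    | succ n ih => rw [Function.iterate_succ_apply']; exact hgX _ ih
  refine ⟨fun n => g^[n] a, fun n => ?_⟩
  simpa only [Function.iterate_succ_apply'] using hg _ (hmem n)

theorem exists_ge_of_forall_or_lt {Q : ℕ → Prop} (c : ℕ → ℕ) (h : ∀ i, Q i ∨ c (i + 1) < c i)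
    (N : ℕ) : ∃ i, N ≤ i ∧ Q i := by
  induction hk : c N using Nat.strong_induction_on generalizing N with
  | _ k ih =>
    rcases h N with hQ | hlt
    · exact ⟨N, le_rfl, hQ⟩
    · obtain ⟨i, hi, hQ⟩ := ih _ (hk ▸ hlt) (N + 1) rfl
      exact ⟨i, by omega, hQ⟩

theorem reflTransGen_of_forall_succ {r : A → A → Prop} {f : ℕ → A}
    (hr : ∀ i, r (f i) (f (i + 1))) {i j : ℕ} (hij : i ≤ j) : ReflTransGen r (f i) (f j) := by
  induction j, hij using Nat.le_induction with
  | base => exact .refl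
  | succ j _ ih => exact ih.tail (hr j)

section

variable {B S : A → A → Prop}

theorem exists_gt_chain_of_strict_sequence {f : ℕ → A} (hB : ∀ i, B (f i) (f (i + 1)))
    (hS : ∀ n, ∃ i, n ≤ i ∧ S (f i) (f (i + 1))) :
    ∃ g : ℕ → A, ∀ n, Gt B S (g n) (g (n + 1)) := by
  set p : ℕ → Prop := fun i => S (f i) (f (i + 1))
  have hinf : (Set.ofPred p).Infinite :=
    Nat.frequently_atTop_iff_infinite.mp (Filter.frequently_atTop.mpr hS)
  exact ⟨fun n => f (Nat.nth p n), fun n => ⟨_, _, .refl, Nat.nth_mem_of_infinite hinf n,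
    reflTransGen_of_forall_succ hB (Nat.nth_strictMono hinf n.lt_succ_self)⟩⟩

def StrictStepAfter (B S : A → A → Prop) (G : A → Prop) : ℕ → A → Prop
  | 0, x => ∃ y, S x y ∧ G y
  | n + 1, x => ∃ y, B x y ∧ StrictStepAfter B S G n y

theorem exists_strictStepAfter_of_reflTransGen {G : A → Prop} {x u v : A}
    (hxu : ReflTransGen B x u) (huv : S u v) (hv : G v) : ∃ n, StrictStepAfter B S G n x := by
  induction hxu using ReflTransGen.head_induction_on with
  | refl => exact ⟨0, v, huv, hv⟩
  | head hxy _ ih =>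
    obtain ⟨n, hn⟩ := ih
    exact ⟨n + 1, _, hxy, hn⟩

theorem exists_strict_sequence_of_strictStepAfter (hSB : ∀ a b, S a b → B a b) {G : A → Prop}
    (hG : ∀ y, G y → ∃ n, StrictStepAfter B S G n y) {n : ℕ} {x : A}
    (hx : StrictStepAfter B S G n x) :
    ∃ f : ℕ → A, (∀ i, B (f i) (f (i + 1))) ∧ (∀ N, ∃ i, N ≤ i ∧ S (f i) (f (i + 1))) := by
  let Step (p q : ℕ × A) : Prop := B p.2 q.2 ∧ (S p.2 q.2 ∨ q.1 < p.1)
  let X : Set (ℕ × A) := {p | StrictStepAfter B S G p.1 p.2}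
  have hstep : ∀ p ∈ X, ∃ q ∈ X, Step p q := by
    rintro ⟨_ | n, x⟩ ⟨y, hxy, hy⟩
    · obtain ⟨m, hm⟩ := hG y hy
      exact ⟨(m, y), hm, hSB _ _ hxy, .inl hxy⟩
    · exact ⟨(n, y), hy, hxy, .inr n.lt_succ_self⟩
  obtain ⟨s, hs⟩ := exists_seq_of_forall_exists hstep (a := (n, x)) hx
  exact ⟨fun i => (s i).2, fun i => (hs i).1,
    exists_ge_of_forall_or_lt (fun i => (s i).1) fun i => (hs i).2⟩

theorem exists_strict_sequence_of_forall_exists_gt (hSB : ∀ a b, S a b → B a b) {T : Set A}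
    (hT : ∀ y ∈ T, ∃ z ∈ T, Gt B S y z) {a : A} (ha : a ∈ T) :
    ∃ f : ℕ → A, (∀ i, B (f i) (f (i + 1))) ∧ (∀ N, ∃ i, N ≤ i ∧ S (f i) (f (i + 1))) := by
  let G (v : A) : Prop := ∃ y ∈ T, ReflTransGen B v y
  have hG : ∀ v, G v → ∃ n, StrictStepAfter B S G n v := by
    rintro v ⟨y, hy, hvy⟩
    obtain ⟨z, hz, u, w, hyu, huw, hwz⟩ := hT y hy
    exact exists_strictStepAfter_of_reflTransGen (hvy.trans hyu) huw ⟨z, hz, hwz⟩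
  obtain ⟨n, hn⟩ := hG a ⟨a, ha, .refl⟩
  exact exists_strict_sequence_of_strictStepAfter hSB hG hn

end

/-- `≻ = B*·S·B*` is well-founded if and only if there is no infinite
`B`-sequence containing infinitely many `S`-steps. -/
theorem gt_wellFounded_iff_no_infinite_strict_sequence
    (B S : A → A → Prop) (hSB : ∀ a b, S a b → B a b) :
    WellFounded (fun a b => Gt B S b a) ↔
      ¬ ∃ f : ℕ → A, (∀ i, B (f i) (f (i + 1))) ∧
        (∀ n, ∃ i, n ≤ i ∧ S (f i) (f (i + 1))) := by
  constructor
  · rintro hwf ⟨f, hB, hS⟩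
    obtain ⟨g, hg⟩ := exists_gt_chain_of_strict_sequence hB hS
    exact (wellFounded_iff_isEmpty_descending_chain.mp hwf).false ⟨g, hg⟩
  · intro hno
    refine ⟨fun a => by_contra fun ha => hno ?_⟩
    exact exists_strict_sequence_of_forall_exists_gt hSB
      (fun y hy => exists_not_acc_lt_of_not_acc hy) ha
end

section
/- Reduction triple criterion for absence of strong chains: suppose (>, ≳, ≥) is a reduction triple (i.e. > is well-founded; ≳ is a quasi-order with > ∘ ≳ ⊆ >; ≥ is a monotonic quasi-order with ≥ ⊆ ≳) such that every instance of a 'strong' pair is oriented by >, every instance of a 'weak' pair by ≳, and every rule instance by ≥. Then there is no infinite sequence s₀, t₀, s₁, t₁, … with sᵢ a root-instance-step (strong pair) to tᵢ, and tᵢ (→_R ∪ weak-root-step)* s_{i+1} for all i. -/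
/-- A root step with a pair from `P`: `s = ℓγ` and `t = rγ`. -/
def RootStep {Sig V : Type*} (P : Set (Tm Sig V × Tm Sig V))
    (s t : Tm Sig V) : Prop :=
  ∃ (l r : Tm Sig V) (γ : V → Tm Sig V),
    (l, r) ∈ P ∧ s = Tm.subst γ l ∧ t = Tm.subst γ r

theorem WellFounded.not_exists_alternating_chain {α : Type*}
    {gt ges strong weak : α → α → Prop} (hwf : WellFounded (fun a b => gt b a))
    (hcompat : ∀ a b c, gt a b → ges b c → gt a c) (hstrong : strong ≤ gt) (hweak : weak ≤ ges) :
    ¬ ∃ (s t : ℕ → α), (∀ i, strong (s i) (t i)) ∧ ∀ i, weak (t i) (s (i + 1)) := by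
  rintro ⟨s, t, hst, hts⟩
  have hdesc : ∀ i, gt (s i) (s (i + 1)) := fun i =>
    hcompat _ _ _ (hstrong _ _ (hst i)) (hweak _ _ (hts i))
  exact (wellFounded_iff_isEmpty_descending_chain.1 hwf).elim ⟨s, hdesc⟩

section Orientation

variable {Sig V : Type*} {rel : Tm Sig V → Tm Sig V → Prop} {a b : Tm Sig V}

theorem RootStep.rel_of_forall_subst {P : Set (Tm Sig V × Tm Sig V)}
    (h : ∀ p ∈ P, ∀ γ : V → Tm Sig V, rel (Tm.subst γ p.1) (Tm.subst γ p.2))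
    (hab : RootStep P a b) : rel a b := by
  obtain ⟨l, r, γ, hP, rfl, rfl⟩ := hab
  exact h (l, r) hP γ

theorem Rewrites.rel_of_forall_subst {R : Set (Tm Sig V × Tm Sig V)}
    (hmono : ∀ (C : Ctx Sig V) a b, rel a b → rel (C.fill a) (C.fill b))
    (h : ∀ p ∈ R, ∀ γ : V → Tm Sig V, rel (Tm.subst γ p.1) (Tm.subst γ p.2))
    (hab : Rewrites R a b) : rel a b := by
  obtain ⟨C, l, r, γ, hR, rfl, rfl⟩ := hab
  exact hmono C _ _ (h (l, r) hR γ)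

end Orientation

theorem reduction_triple_no_strong_chain_general {Sig V : Type*}
    (R Pstrong Pweak : Set (Tm Sig V × Tm Sig V))
    (gt ges ge : Tm Sig V → Tm Sig V → Prop)
    (hwf : WellFounded (fun a b => gt b a))
    (hges_refl : ∀ a, ges a a)
    (hges_trans : ∀ a b c, ges a b → ges b c → ges a c)
    (hcompat : ∀ a b c, gt a b → ges b c → gt a c)
    (hge_mono : ∀ (C : Ctx Sig V) a b, ge a b → ge (C.fill a) (C.fill b))
    (hge_sub : ∀ a b, ge a b → ges a b)
    (hstrong : ∀ p ∈ Pstrong, ∀ γ : V → Tm Sig V,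
      gt (Tm.subst γ p.1) (Tm.subst γ p.2))
    (hweak : ∀ p ∈ Pweak, ∀ γ : V → Tm Sig V,
      ges (Tm.subst γ p.1) (Tm.subst γ p.2))
    (hrule : ∀ p ∈ R, ∀ γ : V → Tm Sig V,
      ge (Tm.subst γ p.1) (Tm.subst γ p.2)) :
    ¬ ∃ (s t : ℕ → Tm Sig V),
        (∀ i, RootStep Pstrong (s i) (t i)) ∧
        (∀ i, Relation.ReflTransGen
          (fun a b => Rewrites R a b ∨ RootStep Pweak a b) (t i) (s (i + 1))) := by
  have : Std.Refl ges := ⟨hges_refl⟩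
  have : IsTrans _ ges := ⟨hges_trans⟩
  refine hwf.not_exists_alternating_chain hcompat
    (fun _ _ => RootStep.rel_of_forall_subst hstrong) (Relation.reflTransGen_le_of_le ?_)
  rintro a b (hR | hP)
  · exact hge_sub a b (hR.rel_of_forall_subst hge_mono hrule)
  · exact hP.rel_of_forall_subst hweak

/-- Reduction triple criterion for the absence of strong chains: if the
reduction triple `(>, ≳, ≥)` orients all instances of strong pairs with `>`,
all instances of weak pairs with `≳`, and all rule instances with the
monotonic `≥`, then there is no infinite strong chain
`sᵢ ⇒_strong tᵢ (→_R ∪ ⇒_weak)* s_{i+1}`. -/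
theorem reduction_triple_no_strong_chain {Sig V : Type*}
    (R Pstrong Pweak : Set (Tm Sig V × Tm Sig V))
    (gt ges ge : Tm Sig V → Tm Sig V → Prop)
    (hwf : WellFounded (fun a b => gt b a))
    (hges_refl : ∀ a, ges a a)
    (hges_trans : ∀ a b c, ges a b → ges b c → ges a c)
    (hcompat : ∀ a b c, gt a b → ges b c → gt a c)
    (hge_refl : ∀ a, ge a a)
    (hge_trans : ∀ a b c, ge a b → ge b c → ge a c)
    (hge_mono : ∀ (C : Ctx Sig V) a b, ge a b → ge (C.fill a) (C.fill b))
    (hge_sub : ∀ a b, ge a b → ges a b)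
    (hstrong : ∀ p ∈ Pstrong, ∀ γ : V → Tm Sig V,
      gt (Tm.subst γ p.1) (Tm.subst γ p.2))
    (hweak : ∀ p ∈ Pweak, ∀ γ : V → Tm Sig V,
      ges (Tm.subst γ p.1) (Tm.subst γ p.2))
    (hrule : ∀ p ∈ R, ∀ γ : V → Tm Sig V,
      ge (Tm.subst γ p.1) (Tm.subst γ p.2)) :
    ¬ ∃ (s t : ℕ → Tm Sig V),
        (∀ i, RootStep Pstrong (s i) (t i)) ∧
        (∀ i, Relation.ReflTransGen
          (fun a b => Rewrites R a b ∨ RootStep Pweak a b) (t i) (s (i + 1))) :=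
  reduction_triple_no_strong_chain_general R Pstrong Pweak gt ges ge hwf hges_refl hges_trans
    hcompat hge_mono hge_sub hstrong hweak hrule
end

section
/- If two ground terms headed by distinct function symbols, both applied to fewer arguments than the symbols' arities, have a common reduct, we reach a contradiction: formally, in a rewrite system where every rule for a symbol f has exactly ar(f) arguments on its left-hand side, if s = f s₁⋯sₙ with n < ar(f) and t = g t₁⋯tₘ with m < ar(g) and f ≠ g, then s and t have no common →_R*-reduct; in particular s ↔*_R t fails in any ground confluent system. -/
/-- The head symbol of a term (leftmost symbol of the spine), if it is a
function symbol. -/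
def Tm.headSym {Sig V : Type*} : Tm Sig V → Option Sig
  | .sym f => some f
  | .var _ => none
  | .app s _ => Tm.headSym s

/-- The number of arguments the head of a term is applied to. -/
def Tm.nargs {Sig V : Type*} : Tm Sig V → ℕ
  | .app s _ => Tm.nargs s + 1
  | _ => 0

/-!
A redex for `f` carries `ar f` arguments, so inside a term `f s₁ ⋯ sₙ` with `n < ar f` no redex
can sit on the spine: every rewrite step happens inside some argument `sᵢ` and leaves the head
symbol and the number of arguments alone. All reducts of `s` are thus headed by `f` and all
reducts of `t` by `g`.
-/

namespace Tm

variable {Sig V : Type*}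

theorem headSym_subst (γ : V → Tm Sig V) {l : Tm Sig V} {f : Sig}
    (hl : l.headSym = some f) : (l.subst γ).headSym = some f := by
  induction l with
  | sym => exact hl
  | var => simp [headSym] at hl
  | app a _ ih => exact ih hl

theorem nargs_subst (γ : V → Tm Sig V) {l : Tm Sig V} {f : Sig}
    (hl : l.headSym = some f) : (l.subst γ).nargs = l.nargs := by
  induction l with
  | sym => rfl
  | var => simp [headSym] at hl
  | app a _ ih => simp [subst, nargs, ih hl]

end Tm

section Rewriting

variable {Sig V : Type*}

def LhsHaveArity (R : Set (Tm Sig V × Tm Sig V)) (ar : Sig → ℕ) : Prop :=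
  ∀ p ∈ R, ∃ f : Sig, Tm.headSym p.1 = some f ∧ Tm.nargs p.1 = ar f

variable {R : Set (Tm Sig V × Tm Sig V)} {ar : Sig → ℕ} {f : Sig}

theorem Rewrites.headSym_nargs_eq
    (hR : LhsHaveArity R ar) {s t : Tm Sig V} (hst : Rewrites R s t)
    (hs : s.headSym = some f) (hn : s.nargs < ar f) :
    t.headSym = some f ∧ t.nargs = s.nargs := by
  obtain ⟨C, l, r, γ, hlr, rfl, rfl⟩ := hst
  induction C with
  | hole =>
    obtain ⟨h, hlh, hlar⟩ := hR _ hlr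
    simp only [Ctx.fill, Tm.headSym_subst γ hlh, Option.some.injEq] at hs
    simp only [Ctx.fill, Tm.nargs_subst γ hlh, hlar, hs, lt_irrefl] at hn
  | appL C a ih =>
    simp only [Ctx.fill, Tm.headSym, Tm.nargs] at hs hn ⊢
    obtain ⟨hhead, hnargs⟩ := ih hs (by omega)
    exact ⟨hhead, by omega⟩
  | appR a C => exact ⟨hs, rfl⟩

theorem reflTransGen_rewrites_headSym_nargs_eq
    (hR : LhsHaveArity R ar) {s u : Tm Sig V} (hsu : Relation.ReflTransGen (Rewrites R) s u)
    (hs : s.headSym = some f) (hn : s.nargs < ar f) :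
    u.headSym = some f ∧ u.nargs = s.nargs := by
  induction hsu with
  | refl => exact ⟨hs, rfl⟩
  | tail _ hstep ih =>
    obtain ⟨hhead, hnargs⟩ := ih
    obtain ⟨hhead', hnargs'⟩ := hstep.headSym_nargs_eq hR hhead (hnargs ▸ hn)
    exact ⟨hhead', hnargs'.trans hnargs⟩

end Rewriting

/-- In a rewrite system where every rule for a symbol `f` has exactly `ar f`
arguments on its left-hand side, reducts of a partially applied term keep
their head symbol and argument count; consequently two terms with distinct
(partially applied) head symbols have no common `→_R*`-reduct. -/
theorem partial_application_heads_not_joinable {Sig V : Type*}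
    (R : Set (Tm Sig V × Tm Sig V)) (ar : Sig → ℕ)
    (hR : ∀ p ∈ R, ∃ f : Sig, Tm.headSym p.1 = some f ∧ Tm.nargs p.1 = ar f)
    (f g : Sig) (s t : Tm Sig V) (n m : ℕ)
    (hsf : Tm.headSym s = some f) (hsn : Tm.nargs s = n) (hn : n < ar f)
    (htg : Tm.headSym t = some g) (htm : Tm.nargs t = m) (hm : m < ar g)
    (hfg : f ≠ g) :
    (∀ u, Relation.ReflTransGen (Rewrites R) s u →
      Tm.headSym u = some f ∧ Tm.nargs u = n) ∧
    ¬ ∃ w, Relation.ReflTransGen (Rewrites R) s w ∧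
           Relation.ReflTransGen (Rewrites R) t w := by
  subst hsn htm
  refine ⟨fun u hsu => reflTransGen_rewrites_headSym_nargs_eq hR hsu hsf hn, ?_⟩
  rintro ⟨w, hsw, htw⟩
  have hwf := (reflTransGen_rewrites_headSym_nargs_eq hR hsw hsf hn).1
  have hwg := (reflTransGen_rewrites_headSym_nargs_eq hR htw htg hm).1
  exact hfg (Option.some_injective _ (hwf.symm.trans hwg))
end
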